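/- arXiv:1803.01753 — 2 statements merged into one kernel-verified Lean document; each statement's English description precedes it below -/
import Mathlib

section
/- For n > k ≥ 1, the edge connectivity of the k-nearest neighbor platoon P(n,k) equals k: there is a set of k edges whose deletion disconnects P(n,k), but no set of fewer than k edges does. -/
/-- The `k`-nearest neighbor platoon: vertices `1, …, n` (as `Fin n`),
with `i ~ j` iff `0 < |i - j| ≤ k`. -/
def platoon (n k : ℕ) : SimpleGraph (Fin n) where
  Adj i j := i ≠ j ∧ ((i : ℤ) - (j : ℤ)).natAbs ≤ k
  symm := ⟨by
    rintro i j ⟨h1, h2⟩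
    exact ⟨h1.symm, by omega⟩⟩
  loopless := ⟨fun i h => h.1 rfl⟩

instance {n k : ℕ} : DecidableRel (platoon n k).Adj :=
  fun i j => inferInstanceAs (Decidable (i ≠ j ∧ ((i : ℤ) - (j : ℤ)).natAbs ≤ k))

lemma platoon_adj_mk {n k a b : ℕ} (ha : a < n) (hb : b < n)
    (h1 : a ≠ b) (h2 : a - b ≤ k) (h3 : b - a ≤ k) :
    (platoon n k).Adj ⟨a, ha⟩ ⟨b, hb⟩ := by
  refine ⟨by simp [Fin.ext_iff]; omega, ?_⟩
  simp only [platoon]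
  omega

lemma step_reach (n k : ℕ) (hk : 1 ≤ k) (hn : k < n)
    (E : Finset (Sym2 (Fin n))) (hE : E.card < k)
    (i : ℕ) (hi : i + 1 < n) :
    ((platoon n k).deleteEdges ↑E).Reachable ⟨i, by omega⟩ ⟨i + 1, hi⟩ := by
  by_contra hni
  have hn0 : 0 < n := by omega
  set G' := (platoon n k).deleteEdges (↑E : Set (Sym2 (Fin n))) with hG'
  set a : Fin n := ⟨i, by omega⟩ with hadef
  set b : Fin n := ⟨i + 1, hi⟩ with hbdef
  set c : ℕ → Fin n := fun m => ⟨m % n, Nat.mod_lt _ hn0⟩ with hcdef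
  -- the direct edge must be deleted
  have hdir : s(a, b) ∈ E := by
    by_contra h
    exact hni (SimpleGraph.Adj.reachable
      (SimpleGraph.deleteEdges_adj.mpr
        ⟨platoon_adj_mk (by omega) hi (by omega) (by omega) (by omega), h⟩))
  set S : Finset ℕ := Finset.Icc (i + 1 - k) (min (n - 1) (i + k)) with hSdef
  have hmemS : ∀ m ∈ S, i + 1 - k ≤ m ∧ m ≤ min (n - 1) (i + k) := by
    intro m hm; exact Finset.mem_Icc.mp hm
  -- all two-hop paths must be blocked
  have hmid : ∀ m ∈ S, m ≠ i → m ≠ i + 1 → s(a, c m) ∈ E ∨ s(c m, b) ∈ E := by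
    intro m hm h1 h2
    by_contra h
    push_neg at h
    obtain ⟨hmlo, hmhi⟩ := hmemS m hm
    have hmn : m < n := by omega
    have hmod : m % n = m := Nat.mod_eq_of_lt hmn
    have A1 : G'.Adj a (c m) := by
      rw [hG', SimpleGraph.deleteEdges_adj]
      refine ⟨?_, h.1⟩
      simp only [hcdef, hmod]
      exact platoon_adj_mk _ hmn (by omega) (by omega) (by omega)
    have A2 : G'.Adj (c m) b := by
      rw [hG', SimpleGraph.deleteEdges_adj]
      refine ⟨?_, h.2⟩
      simp only [hcdef, hmod]
      exact platoon_adj_mk hmn hi (by omega) (by omega) (by omega)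
    exact hni (A1.reachable.trans A2.reachable)
  -- pigeonhole
  have hiS : i ∈ S := Finset.mem_Icc.mpr (by omega)
  set S' : Finset ℕ := S.erase i with hS'def
  have hS'c : k ≤ S'.card := by
    rw [hS'def, Finset.card_erase_of_mem hiS, hSdef, Nat.card_Icc]
    omega
  set g : ℕ → Sym2 (Fin n) := fun m =>
    if m = i + 1 then s(a, b) else if s(a, c m) ∈ E then s(a, c m) else s(c m, b) with hgdef
  have hmaps : ∀ m ∈ S', g m ∈ E := by
    intro m hm
    rcases Finset.mem_erase.mp hm with ⟨hne, hmS⟩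
    by_cases h2 : m = i + 1
    · simp only [hgdef, if_pos h2]; exact hdir
    · rcases hmid m hmS hne h2 with h | h
      · simp only [hgdef, if_neg h2, if_pos h]; exact h
      · simp only [hgdef, if_neg h2]
        split
        · assumption
        · exact h
  have hval : ∀ m m' : ℕ, m ∈ S' → m' ∈ S' → m % n = m ∧ m ≠ i := by
    intro m m' hm hm'
    rcases Finset.mem_erase.mp hm with ⟨hne, hmS⟩
    obtain ⟨h1, h2⟩ := hmemS m hmS
    exact ⟨Nat.mod_eq_of_lt (by omega), hne⟩
  have hinj : Set.InjOn g S' := by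
    intro m hm m' hm' heq
    rw [Finset.mem_coe] at hm hm'
    obtain ⟨hmod, hmi⟩ := hval m m' hm hm'
    obtain ⟨hmod', hmi'⟩ := hval m' m hm' hm
    by_cases e1 : m = i + 1 <;> by_cases e2 : m' = i + 1
    · omega
    all_goals simp only [hgdef, if_pos, if_neg, e1, e2, if_true, if_false] at heq
    · -- m = i+1, m' ≠ i+1 : heq : s(a,b) = (if ... )
      subst e1
      split at heq <;>
      · rw [Sym2.eq_iff] at heq
        simp only [hadef, hbdef, hcdef, Fin.mk.injEq] at heq
        omega
    · subst e2
      split at heq <;>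
      · rw [Sym2.eq_iff] at heq
        simp only [hadef, hbdef, hcdef, Fin.mk.injEq] at heq
        omega
    · split at heq <;> split at heq <;>
      · rw [Sym2.eq_iff] at heq
        simp only [hadef, hbdef, hcdef, Fin.mk.injEq] at heq
        omega
  have hle := Finset.card_le_card_of_injOn g hmaps hinj
  omega

/-- For `n > k ≥ 1`, the edge connectivity of `P(n,k)` equals `k`: some set of `k`
edges disconnects the graph, but no set of fewer than `k` edges does. -/
theorem stmt_2 (n k : ℕ) (hk : 1 ≤ k) (hn : k < n) :
    (∃ E : Finset (Sym2 (Fin n)), E.card = k ∧ ↑E ⊆ (platoon n k).edgeSet ∧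
      ¬ ((platoon n k).deleteEdges ↑E).Connected) ∧
    (∀ E : Finset (Sym2 (Fin n)), E.card < k → ↑E ⊆ (platoon n k).edgeSet →
      ((platoon n k).deleteEdges ↑E).Connected) := by
  have hn0 : 0 < n := by omega
  constructor
  · -- the k edges at vertex 0
    set v0 : Fin n := ⟨0, hn0⟩ with hv0
    set c : ℕ → Fin n := fun m => ⟨m % n, Nat.mod_lt _ hn0⟩ with hcdef
    refine ⟨(Finset.Icc 1 k).image (fun j => s(v0, c j)), ?_, ?_, ?_⟩
    · rw [Finset.card_image_of_injOn, Nat.card_Icc]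
      · omega
      · intro j hj j' hj' heq
        simp only [Finset.coe_Icc, Set.mem_Icc] at hj hj'
        rw [Sym2.eq_iff] at heq
        simp only [hv0, hcdef, Fin.mk.injEq] at heq
        have : j % n = j := Nat.mod_eq_of_lt (by omega)
        have : j' % n = j' := Nat.mod_eq_of_lt (by omega)
        omega
    · intro e he
      simp only [Finset.coe_image, Set.mem_image, Finset.mem_coe, Finset.mem_Icc] at he
      obtain ⟨j, ⟨hj1, hj2⟩, rfl⟩ := he
      have hjn : j % n = j := Nat.mod_eq_of_lt (by omega)
      rw [SimpleGraph.mem_edgeSet]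
      simp only [hv0, hcdef, hjn]
      exact platoon_adj_mk hn0 (by omega) (by omega) (by omega) (by omega)
    · intro hCon
      have hiso : ∀ x : Fin n, ¬ ((platoon n k).deleteEdges
          ↑((Finset.Icc 1 k).image (fun j => s(v0, c j)))).Adj v0 x := by
        intro x hx
        rw [SimpleGraph.deleteEdges_adj] at hx
        obtain ⟨⟨hne, hle⟩, hnot⟩ := hx
        apply hnot
        simp only [Finset.coe_image, Set.mem_image, Finset.mem_coe, Finset.mem_Icc]
        have hx0 : (x : ℕ) ≠ 0 := by
          intro h; exact hne (by simp [hv0, Fin.ext_iff, h])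
        have hxk : (x : ℕ) ≤ k := by
          simp only [hv0] at hle
          omega
        refine ⟨(x : ℕ), ⟨by omega, hxk⟩, ?_⟩
        congr 1
        simp [hcdef, Fin.ext_iff, Nat.mod_eq_of_lt x.isLt]
      have h1n : 1 < n := by omega
      have hr := hCon.preconnected v0 ⟨1, h1n⟩
      obtain ⟨w⟩ := hr
      exact hiso _ (w.adj_snd (SimpleGraph.Walk.not_nil_of_ne
        (by simp [hv0, Fin.ext_iff])))
  · intro E hE _
    have hreach0 : ∀ v : Fin n, ((platoon n k).deleteEdges ↑E).Reachable ⟨0, hn0⟩ v := by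
      rintro ⟨j, hj⟩
      induction j with
      | zero => exact SimpleGraph.Reachable.refl _
      | succ j ih => exact (ih (by omega)).trans (step_reach n k hk hn E hE j hj)
    have : Nonempty (Fin n) := ⟨⟨0, hn0⟩⟩
    exact ⟨fun u v => (hreach0 u).symm.trans (hreach0 v)⟩
end

section
/- For the k-nearest neighbor platoon P(n,k) with n ≥ 2k, the second-smallest Laplacian eigenvalue satisfies λ_2(L) ≤ 2k(k+1)/⌊n/2⌋. -/
open Matrix in
/-- The algebraic connectivity `λ₂(L)`: by Courant–Fischer it is the infimum of the
Rayleigh quotient `xᵀ L x / xᵀ x` over nonzero vectors `x` orthogonal to the all-ones vector. -/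
noncomputable def lambda2 {V : Type} [Fintype V] [DecidableEq V] (G : SimpleGraph V)
    [DecidableRel G.Adj] : ℝ :=
  sInf { r : ℝ | ∃ x : V → ℝ, x ≠ 0 ∧ (∑ v, x v) = 0 ∧
    r = (x ⬝ᵥ (G.lapMatrix ℝ *ᵥ x)) / (x ⬝ᵥ x) }

open Finset Matrix

lemma sq_sum_Icc (k : ℕ) :
    ∑ d ∈ Finset.Icc (-(k:ℤ)) (k:ℤ), ((d:ℝ))^2 = k*(k+1)*(2*k+1)/3 := by
  induction k with
  | zero => simp
  | succ k ih =>
    have hset : Finset.Icc (-((k+1:ℕ)):ℤ) ((k+1:ℕ):ℤ) =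
        insert (-((k:ℤ)+1)) (insert ((k:ℤ)+1) (Finset.Icc (-(k:ℤ)) (k:ℤ))) := by
      ext d; simp only [Finset.mem_Icc, Finset.mem_insert]; push_cast; omega
    rw [hset, Finset.sum_insert, Finset.sum_insert, ih]
    · push_cast; ring
    · simp only [Finset.mem_Icc]; omega
    · simp only [Finset.mem_insert, Finset.mem_Icc]; omega

lemma sum_range_sq' (n : ℕ) :
    ∑ i ∈ Finset.range n, ((i:ℝ))^2 = n*(n-1)*(2*n-1)/6 := by
  induction n with
  | zero => simp
  | succ n ih => rw [Finset.sum_range_succ, ih]; push_cast; ring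

lemma sum_range_id' (n : ℕ) :
    ∑ i ∈ Finset.range n, ((i:ℝ)) = n*(n-1)/2 := by
  induction n with
  | zero => simp
  | succ n ih => rw [Finset.sum_range_succ, ih]; push_cast; ring

lemma inner_bound (n k : ℕ) (i : Fin n) :
    ∑ j : Fin n, (if (platoon n k).Adj i j
        then ((2*(i:ℝ) - (n-1)) - (2*(j:ℝ) - (n-1)))^2 else 0)
      ≤ 4*((k:ℝ)*(k+1)*(2*k+1)/3) := by
  set g : ℤ → ℝ := fun d => if d ≠ 0 ∧ d.natAbs ≤ k then 4*(d:ℝ)^2 else 0 with hg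
  have hterm : ∀ j : Fin n, (if (platoon n k).Adj i j
      then ((2*(i:ℝ) - (n-1)) - (2*(j:ℝ) - (n-1)))^2 else 0) = g ((j:ℤ) - (i:ℤ)) := by
    intro j
    have hiff : (platoon n k).Adj i j ↔ ((j:ℤ) - (i:ℤ) ≠ 0 ∧ ((j:ℤ) - (i:ℤ)).natAbs ≤ k) := by
      show (i ≠ j ∧ ((i : ℤ) - (j : ℤ)).natAbs ≤ k) ↔ _
      constructor
      · rintro ⟨h1, h2⟩
        refine ⟨fun h => h1 ?_, by omega⟩
        have : (i:ℤ) = (j:ℤ) := by omega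
        exact Fin.ext (by exact_mod_cast this)
      · rintro ⟨h1, h2⟩
        refine ⟨fun h => h1 ?_, by omega⟩
        rw [h]; ring
    rw [hg]
    simp only [hiff]
    split
    · have : ((2*(i:ℝ) - (n-1)) - (2*(j:ℝ) - (n-1)))^2 = 4*((((j:ℤ) - (i:ℤ)):ℤ):ℝ)^2 := by
        push_cast; ring
      rw [this]
    · rfl
  rw [Finset.sum_congr rfl (fun j _ => hterm j)]
  have hinj : Function.Injective (fun j : Fin n => (j:ℤ) - (i:ℤ)) := by
    intro a b hab
    simp only at hab
    exact Fin.ext (by omega)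
  rw [← Finset.sum_image (f := g) (g := fun j : Fin n => (j:ℤ) - (i:ℤ))
      (fun a _ b _ h => hinj h)]
  have hstep : ∑ d ∈ Finset.image (fun j : Fin n => (j:ℤ) - (i:ℤ)) Finset.univ, g d
      = ∑ d ∈ (Finset.image (fun j : Fin n => (j:ℤ) - (i:ℤ)) Finset.univ) ∩
          Finset.Icc (-(k:ℤ)) (k:ℤ), g d := by
    refine (Finset.sum_subset (Finset.inter_subset_left) ?_).symm
    intro d hd hd2
    have : d ∉ Finset.Icc (-(k:ℤ)) (k:ℤ) := fun h => hd2 (Finset.mem_inter.mpr ⟨hd, h⟩)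
    simp only [Finset.mem_Icc, not_and, not_le] at this
    rw [hg]
    simp only [ite_eq_right_iff]
    rintro ⟨h1, h2⟩
    omega
  rw [hstep]
  calc ∑ d ∈ (Finset.image (fun j : Fin n => (j:ℤ) - (i:ℤ)) Finset.univ) ∩
          Finset.Icc (-(k:ℤ)) (k:ℤ), g d
      ≤ ∑ d ∈ Finset.Icc (-(k:ℤ)) (k:ℤ), g d := by
        refine Finset.sum_le_sum_of_subset_of_nonneg (Finset.inter_subset_right) ?_
        intro d _ _
        rw [hg]; dsimp only; positivity
    _ ≤ ∑ d ∈ Finset.Icc (-(k:ℤ)) (k:ℤ), 4*((d:ℝ))^2 := by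
        refine Finset.sum_le_sum ?_
        intro d _
        rw [hg]; dsimp only; split
        · exact le_refl _
        · positivity
    _ = 4*((k:ℝ)*(k+1)*(2*k+1)/3) := by rw [← Finset.mul_sum, sq_sum_Icc]

/-- For `P(n,k)` with `n ≥ 2k`, the algebraic connectivity satisfies
`λ₂(L) ≤ 2k(k+1)/⌊n/2⌋`. -/
theorem stmt_10 (n k : ℕ) (hk : 1 ≤ k) (hn : 2 * k ≤ n) :
    lambda2 (platoon n k) ≤ (2 * k * (k + 1) : ℝ) / (n / 2 : ℕ) := by
  have hn2 : 2 ≤ n := by omega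
  set m : ℕ := n / 2 with hm
  have hm1 : 1 ≤ m := by omega
  have hm2 : 2 * m ≤ n := by omega
  set x : Fin n → ℝ := fun i => 2*(i:ℝ) - (n-1) with hx
  -- x ≠ 0
  have hx0 : x ≠ 0 := by
    intro h
    have := congrFun h ⟨0, by omega⟩
    simp only [hx, Pi.zero_apply] at this
    have : (n:ℝ) = 1 := by push_cast at this; linarith
    have : n = 1 := by exact_mod_cast this
    omega
  -- sum zero
  have hsum : (∑ v, x v) = 0 := by
    rw [hx, Fin.sum_univ_eq_sum_range (fun i => 2*(i:ℝ) - (n-1)) n]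
    rw [Finset.sum_sub_distrib, Finset.sum_const, Finset.card_range, ← Finset.mul_sum,
      sum_range_id']
    ring
  -- x ⬝ᵥ x
  have hxx : x ⬝ᵥ x = (n:ℝ)*(n^2-1)/3 := by
    rw [dotProduct]
    have : ∀ v : Fin n, x v * x v = 4*(v:ℝ)^2 - 4*((n:ℝ)-1)*(v:ℝ) + ((n:ℝ)-1)^2 := by
      intro v; rw [hx]; ring
    rw [Finset.sum_congr rfl (fun v _ => this v),
      Fin.sum_univ_eq_sum_range (fun i => 4*(i:ℝ)^2 - 4*((n:ℝ)-1)*(i:ℝ) + ((n:ℝ)-1)^2) n]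
    rw [Finset.sum_add_distrib, Finset.sum_sub_distrib, ← Finset.mul_sum, ← Finset.mul_sum,
      sum_range_sq', sum_range_id', Finset.sum_const, Finset.card_range, nsmul_eq_mul]
    have h1 : (1:ℝ) ≤ n := by exact_mod_cast (by omega : 1 ≤ n)
    ring
  have hxxpos : 0 < x ⬝ᵥ x := by
    rw [hxx]
    have h2 : (2:ℝ) ≤ n := by exact_mod_cast hn2
    nlinarith
  -- numerator bound
  have hnum : x ⬝ᵥ (SimpleGraph.lapMatrix ℝ (platoon n k) *ᵥ x)
      ≤ (n:ℝ) * (4*((k:ℝ)*(k+1)*(2*k+1)/3)) / 2 := by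
    rw [← Matrix.toLinearMap₂'_apply', SimpleGraph.lapMatrix_toLinearMap₂']
    have : ∑ i : Fin n, ∑ j : Fin n, (if (platoon n k).Adj i j then (x i - x j)^2 else 0)
        ≤ ∑ _i : Fin n, (4*((k:ℝ)*(k+1)*(2*k+1)/3)) := by
      refine Finset.sum_le_sum (fun i _ => ?_)
      exact inner_bound n k i
    rw [Finset.sum_const, Finset.card_univ, Fintype.card_fin, nsmul_eq_mul] at this
    linarith
  have hnum0 : 0 ≤ x ⬝ᵥ (SimpleGraph.lapMatrix ℝ (platoon n k) *ᵥ x) := by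
    have := (SimpleGraph.posSemidef_lapMatrix ℝ (platoon n k)).dotProduct_mulVec_nonneg x
    rwa [star_trivial] at this
  -- membership
  have hmem : (x ⬝ᵥ (SimpleGraph.lapMatrix ℝ (platoon n k) *ᵥ x)) / (x ⬝ᵥ x)
      ∈ { r : ℝ | ∃ y : Fin n → ℝ, y ≠ 0 ∧ (∑ v, y v) = 0 ∧
        r = (y ⬝ᵥ (SimpleGraph.lapMatrix ℝ (platoon n k) *ᵥ y)) / (y ⬝ᵥ y) } :=
    ⟨x, hx0, hsum, rfl⟩
  have hbdd : BddBelow { r : ℝ | ∃ y : Fin n → ℝ, y ≠ 0 ∧ (∑ v, y v) = 0 ∧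
      r = (y ⬝ᵥ (SimpleGraph.lapMatrix ℝ (platoon n k) *ᵥ y)) / (y ⬝ᵥ y) } := by
    refine ⟨0, fun r hr => ?_⟩
    obtain ⟨y, _, _, rfl⟩ := hr
    have h1 : 0 ≤ y ⬝ᵥ (SimpleGraph.lapMatrix ℝ (platoon n k) *ᵥ y) := by
      have := (SimpleGraph.posSemidef_lapMatrix ℝ (platoon n k)).dotProduct_mulVec_nonneg y
      rwa [star_trivial] at this
    have h2 : 0 ≤ y ⬝ᵥ y := by
      rw [dotProduct]
      exact Finset.sum_nonneg (fun v _ => mul_self_nonneg _)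
    exact div_nonneg h1 h2
  have hle : lambda2 (platoon n k)
      ≤ (x ⬝ᵥ (SimpleGraph.lapMatrix ℝ (platoon n k) *ᵥ x)) / (x ⬝ᵥ x) :=
    csInf_le hbdd hmem
  refine hle.trans ?_
  -- final arithmetic
  have hmpos : (0:ℝ) < m := by exact_mod_cast hm1
  rw [div_le_div_iff₀ hxxpos hmpos]
  have hm2R : 2*(m:ℝ) ≤ n := by exact_mod_cast hm2
  have hnR : 2*(k:ℝ) ≤ n := by exact_mod_cast hn
  have hn2R : (2:ℝ) ≤ n := by exact_mod_cast hn2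
  have hkeyR : ((2*(k:ℝ)+1) * m) ≤ (n:ℝ)^2 - 1 := by
    have e1 : (2*(k:ℝ)+1)*m ≤ ((n:ℝ)+1)*m :=
      mul_le_mul_of_nonneg_right (by linarith) (le_of_lt hmpos)
    have e2 : ((n:ℝ)+1)*(2*m) ≤ ((n:ℝ)+1)*n :=
      mul_le_mul_of_nonneg_left hm2R (by linarith)
    have e2' : ((n:ℝ)+1)*(2*(m:ℝ)) = 2*(((n:ℝ)+1)*m) := by ring
    have e3 : ((n:ℝ)+1)*n ≤ 2*(n:ℝ)^2 - 2 := by nlinarith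
    linarith
  have hA : x ⬝ᵥ (SimpleGraph.lapMatrix ℝ (platoon n k) *ᵥ x) * m
      ≤ ((n:ℝ) * (4*((k:ℝ)*(k+1)*(2*k+1)/3)) / 2) * m := by
    exact mul_le_mul_of_nonneg_right hnum (le_of_lt hmpos)
  refine hA.trans ?_
  rw [hxx]
  have hk1 : (1:ℝ) ≤ k := by exact_mod_cast hk
  have hnpos : (0:ℝ) < n := by linarith
  nlinarith [mul_le_mul_of_nonneg_left hkeyR
    (show (0:ℝ) ≤ 2*(n:ℝ)*k*(k+1)/3 by positivity)]
end
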